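/- arXiv:0809.3011 — 6 statements merged into one kernel-verified Lean document; each statement's English description precedes it below -/
import Mathlib

section
/- The Bilateral Grand Lebesgue norm has the Fatou property: if (f_n) is a nondecreasing sequence of non-negative measurable functions on X converging pointwise to f, with sup_n ‖f_n‖_{G(ψ)} < ∞, then ‖f_n‖_{G(ψ)} converges, increasing, to ‖f‖_{G(ψ)}. -/
noncomputable section

open MeasureTheory Filter Set Topology
open scoped ENNReal NNReal

/-- The set of exponents `p` with `a < p < b` (where `b : ℝ≥0∞` may be `∞`). -/
def expSet (a : ℝ) (b : ℝ≥0∞) : Set ℝ := {p : ℝ | a < p ∧ ENNReal.ofReal p < b}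

/-- The filter of real exponents `p` tending to `b` from below (`p → b⁻`);
when `b = ∞` this amounts to `p → ∞`. -/
def atBbelow (b : ℝ≥0∞) : Filter ℝ :=
  Filter.comap ENNReal.ofReal (nhdsWithin b (Set.Iio b))

/-- The class `EΨ(a,b)`: continuous `ψ` on `(a,b)` with `ψ(p) ≥ 1` and `ψ(b-0) = ∞`. -/
def IsEPsi (a : ℝ) (b : ℝ≥0∞) (ψ : ℝ → ℝ) : Prop :=
  ContinuousOn ψ (expSet a b) ∧ (∀ p ∈ expSet a b, 1 ≤ ψ p) ∧
    Filter.Tendsto ψ (atBbelow b) Filter.atTop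

/-- Norm of the Bilateral Grand Lebesgue space `G(ψ; a, b)` over a measure `μ`:
`‖f‖_{G(ψ)} = sup_{p ∈ (a,b)} ‖f‖_{L^p(μ)} / ψ(p)`, with values in `ℝ≥0∞`. -/
def GNorm {α : Type*} [MeasurableSpace α] (μ : Measure α) (a : ℝ) (b : ℝ≥0∞)
    (ψ : ℝ → ℝ) (f : α → ℝ) : ℝ≥0∞ :=
  ⨆ p ∈ expSet a b, eLpNorm f (ENNReal.ofReal p) μ / ENNReal.ofReal (ψ p)

/-- The class `Ψ(a,b)` (relative to a measure `μ`): positive continuous `ψ` on `(a,b)`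
with `ψ(b-0) = ∞`, admitting a representation `ψ(p) = ‖f‖_{L^p(μ)}` for `p ∈ (a,b)`, where
the measurable `f` lies in `L^p(μ)` for all `p ∈ (a,b)`. -/
def IsPsi {α : Type*} [MeasurableSpace α] (μ : Measure α) (a : ℝ) (b : ℝ≥0∞)
    (ψ : ℝ → ℝ) : Prop :=
  ContinuousOn ψ (expSet a b) ∧ (∀ p ∈ expSet a b, 0 < ψ p) ∧
    Filter.Tendsto ψ (atBbelow b) Filter.atTop ∧
    ∃ f : α → ℝ, AEStronglyMeasurable f μ ∧
      ∀ p ∈ expSet a b, eLpNorm f (ENNReal.ofReal p) μ = ENNReal.ofReal (ψ p)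

/-- The fundamental function `φ(G(ψ;a,b), s) = sup_{p ∈ (a,b)} s^{1/p}/ψ(p)`, real-valued. -/
def fundR (a : ℝ) (b : ℝ≥0∞) (ψ : ℝ → ℝ) (s : ℝ) : ℝ :=
  ⨆ p : expSet a b, s ^ (1 / (p : ℝ)) / ψ p

/-- The fundamental function `φ(G(ψ;a,b), δ) = sup_{p ∈ (a,b)} δ^{1/p}/ψ(p)`, `ℝ≥0∞`-valued. -/
def fundE (a : ℝ) (b : ℝ≥0∞) (ψ : ℝ → ℝ) (δ : ℝ≥0∞) : ℝ≥0∞ :=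
  ⨆ p ∈ expSet a b, δ ^ (1 / p) / ENNReal.ofReal (ψ p)

/-! For each exponent `p`, Fatou's lemma together with monotonicity gives
`‖F‖_p = sup_n ‖f_n‖_p`. Dividing by `ψ(p)` commutes with this supremum in `ℝ≥0∞`, and two
suprema commute, so `‖F‖_{G(ψ)} = sup_n ‖f_n‖_{G(ψ)}`, the limit of a nondecreasing sequence. -/

section

variable {α : Type*} [MeasurableSpace α] {μ : Measure α}

theorem eLpNorm_eq_iSup_of_norm_monotone {E : Type*} [NormedAddCommGroup E] {p : ℝ≥0∞}
    {f : ℕ → α → E} {F : α → E} (hf : ∀ n, AEStronglyMeasurable (f n) μ)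
    (hmono : ∀ᵐ x ∂μ, Monotone fun n => ‖f n x‖)
    (hlim : ∀ᵐ x ∂μ, Tendsto (fun n => f n x) atTop (𝓝 (F x))) :
    eLpNorm F p μ = ⨆ n, eLpNorm (f n) p μ := by
  have hmono_eLpNorm : Monotone fun n => eLpNorm (f n) p μ := fun m n hmn =>
    eLpNorm_mono_ae (hmono.mono fun x hx => hx hmn)
  refine le_antisymm ?_ (iSup_le fun n => eLpNorm_mono_ae ?_)
  · calc eLpNorm F p μ ≤ atTop.liminf fun n => eLpNorm (f n) p μ :=
          Lp.eLpNorm_lim_le_liminf_eLpNorm hf F hlim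
      _ = ⨆ n, eLpNorm (f n) p μ := (tendsto_atTop_iSup hmono_eLpNorm).liminf_eq
  · filter_upwards [hmono, hlim] with x hx_mono hx_lim
    exact hx_mono.ge_of_tendsto hx_lim.norm n

variable {a : ℝ} {b : ℝ≥0∞} {ψ : ℝ → ℝ}

theorem GNorm_mono {f g : α → ℝ} (h : ∀ᵐ x ∂μ, ‖f x‖ ≤ ‖g x‖) :
    GNorm μ a b ψ f ≤ GNorm μ a b ψ g :=
  iSup₂_mono fun _ _ => ENNReal.div_le_div_right (eLpNorm_mono_ae h) _

theorem GNorm_eq_iSup_of_norm_monotone {f : ℕ → α → ℝ} {F : α → ℝ}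
    (hf : ∀ n, AEStronglyMeasurable (f n) μ) (hmono : ∀ᵐ x ∂μ, Monotone fun n => ‖f n x‖)
    (hlim : ∀ᵐ x ∂μ, Tendsto (fun n => f n x) atTop (𝓝 (F x))) :
    GNorm μ a b ψ F = ⨆ n, GNorm μ a b ψ (f n) := by
  simp only [GNorm, eLpNorm_eq_iSup_of_norm_monotone hf hmono hlim, ENNReal.iSup_div]
  exact (iSup_comm.trans (iSup_congr fun _ => iSup_comm)).symm

end

theorem fatou_property_GNorm_general {α : Type*} [MeasurableSpace α] (μ : Measure α)
    (a : ℝ) (b : ℝ≥0∞)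
    (ψ : ℝ → ℝ)
    (f : ℕ → α → ℝ) (F : α → ℝ)
    (hmeas : ∀ n, Measurable (f n))
    (hnonneg : ∀ n x, 0 ≤ f n x)
    (hmono : ∀ x, Monotone fun n => f n x)
    (hlim : ∀ x, Tendsto (fun n => f n x) atTop (𝓝 (F x))) :
    (Monotone fun n => GNorm μ a b ψ (f n)) ∧
      Tendsto (fun n => GNorm μ a b ψ (f n)) atTop (𝓝 (GNorm μ a b ψ F)) := by
  have hnorm_mono : ∀ x, Monotone fun n => ‖f n x‖ := fun x m n hmn => by
    simpa only [Real.norm_of_nonneg (hnonneg _ x)] using hmono x hmn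
  have hGNorm_mono : Monotone fun n => GNorm μ a b ψ (f n) := fun m n hmn =>
    GNorm_mono (.of_forall fun x => hnorm_mono x hmn)
  refine ⟨hGNorm_mono, ?_⟩
  rw [GNorm_eq_iSup_of_norm_monotone (fun n => (hmeas n).aestronglyMeasurable)
    (.of_forall hnorm_mono) (.of_forall hlim)]
  exact tendsto_atTop_iSup hGNorm_mono

/-- **Fatou property of the BGL norm.** If `(f n)` is a nondecreasing sequence of
non-negative measurable functions on a σ-finite measure space converging pointwise to `F`, with
`sup_n ‖f n‖_{G(ψ)} < ∞`, then `‖f n‖_{G(ψ)}` converges, increasing, to `‖F‖_{G(ψ)}`. -/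
theorem fatou_property_GNorm {α : Type*} [MeasurableSpace α] (μ : Measure α) [SigmaFinite μ]
    (a : ℝ) (b : ℝ≥0∞) (ha : 1 ≤ a) (hab : ENNReal.ofReal a < b)
    (ψ : ℝ → ℝ) (hψ : IsEPsi a b ψ)
    (f : ℕ → α → ℝ) (F : α → ℝ)
    (hmeas : ∀ n, Measurable (f n))
    (hnonneg : ∀ n x, 0 ≤ f n x)
    (hmono : ∀ x, Monotone fun n => f n x)
    (hlim : ∀ x, Tendsto (fun n => f n x) atTop (𝓝 (F x)))
    (hbdd : (⨆ n, GNorm μ a b ψ (f n)) < ⊤) :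
    (Monotone fun n => GNorm μ a b ψ (f n)) ∧
      Tendsto (fun n => GNorm μ a b ψ (f n)) atTop (𝓝 (GNorm μ a b ψ F)) :=
  fatou_property_GNorm_general μ a b ψ f F hmeas hnonneg hmono hlim
end
end

section
/- The Bilateral Grand Lebesgue space G(ψ) is complete: every Cauchy sequence in the norm ‖·‖_{G(ψ)} converges in G(ψ), so G(ψ) is a Banach space. -/
noncomputable section

open MeasureTheory Filter Set Topology
open scoped ENNReal NNReal

/-! A sequence that is Cauchy in `G(ψ)` is Cauchy in `L^{p₀}` for any fixed `p₀ ∈ (a, b)`, because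
`‖g‖_{p₀} ≤ ψ(p₀) ‖g‖_{G(ψ)}`; completeness of `L^{p₀}` then gives a subsequence `f (n k)` converging
a.e. to some `F`. By Fatou's lemma every `L^p` norm, hence also the `G(ψ)` norm, is lower
semicontinuous along a.e. convergent sequences, so `‖f m - F‖_{G(ψ)} ≤ liminf_k ‖f m - f (n k)‖_{G(ψ)}`,
which is small for large `m`. Finally `F = f m - (f m - F)` lies in `G(ψ)` by the triangle inequality. -/

namespace MeasureTheory

variable {α E : Type*} [MeasurableSpace α] {μ : Measure α}
  [NormedAddCommGroup E] [CompleteSpace E]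

theorem exists_subseq_ae_tendsto_of_tendsto_eLpNorm_sub {p : ℝ≥0∞} (hp : 1 ≤ p)
    {f : ℕ → α → E} (hf : ∀ n, MemLp (f n) p μ)
    (hcau : Tendsto (fun mn : ℕ × ℕ => eLpNorm (f mn.1 - f mn.2) p μ) atTop (𝓝 0)) :
    ∃ F : α → E, AEStronglyMeasurable F μ ∧ ∃ ns : ℕ → ℕ, StrictMono ns ∧
      ∀ᵐ x ∂μ, Tendsto (fun k => f (ns k) x) atTop (𝓝 (F x)) := by
  have : Fact (1 ≤ p) := ⟨hp⟩
  let u : ℕ → Lp E p μ := fun n => (hf n).toLp (f n)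
  have hu : CauchySeq u := cauchySeq_iff_tendsto.2 <|
    uniformity_basis_edist.tendsto_right_iff.2 fun ε hε =>
      (hcau.eventually (gt_mem_nhds hε)).mono fun mn h => by
        simpa only [Set.mem_ofPred_eq, Prod.map, u, Lp.edist_toLp_toLp] using h
  obtain ⟨G, hG⟩ := cauchySeq_tendsto_of_complete hu
  have hmeas : TendstoInMeasure μ f atTop G :=
    (tendstoInMeasure_of_tendsto_Lp hG).congr_left fun n => (hf n).coeFn_toLp
  obtain ⟨ns, hns, hlim⟩ := hmeas.exists_seq_tendsto_ae
  exact ⟨G, Lp.aestronglyMeasurable G, ns, hns, hlim⟩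

end MeasureTheory

section GrandLebesgue

variable {α : Type*} [MeasurableSpace α] {μ : Measure α} {a : ℝ} {b : ℝ≥0∞} {ψ : ℝ → ℝ}

theorem expSet_nonempty (hab : ENNReal.ofReal a < b) : (expSet a b).Nonempty := by
  obtain ⟨r, -, har, hrb⟩ := ENNReal.lt_iff_exists_real_btwn.1 hab
  exact ⟨r, (ENNReal.ofReal_lt_ofReal_iff'.1 har).1, hrb⟩

theorem GNorm_le_iff (hψ : ∀ p ∈ expSet a b, 0 < ψ p) {f : α → ℝ} {C : ℝ≥0∞} :
    GNorm μ a b ψ f ≤ C ↔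
      ∀ p ∈ expSet a b, eLpNorm f (ENNReal.ofReal p) μ ≤ C * ENNReal.ofReal (ψ p) := by
  refine iSup₂_le_iff.trans <| forall₂_congr fun p hp => ?_
  exact ENNReal.div_le_iff (ENNReal.ofReal_pos.2 (hψ p hp)).ne' ENNReal.ofReal_ne_top

theorem eLpNorm_le_GNorm_mul (hψ : ∀ p ∈ expSet a b, 0 < ψ p) (f : α → ℝ) {p : ℝ}
    (hp : p ∈ expSet a b) :
    eLpNorm f (ENNReal.ofReal p) μ ≤ GNorm μ a b ψ f * ENNReal.ofReal (ψ p) :=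
  (GNorm_le_iff hψ).1 le_rfl p hp

theorem memLp_of_GNorm_lt_top (hψ : ∀ p ∈ expSet a b, 0 < ψ p) {f : α → ℝ}
    (hf : AEStronglyMeasurable f μ) (hfG : GNorm μ a b ψ f < ⊤) {p : ℝ}
    (hp : p ∈ expSet a b) : MemLp f (ENNReal.ofReal p) μ :=
  ⟨hf, (eLpNorm_le_GNorm_mul hψ f hp).trans_lt (ENNReal.mul_lt_top hfG ENNReal.ofReal_lt_top)⟩

theorem GNorm_sub_le (ha : 1 ≤ a) (hψ : ∀ p ∈ expSet a b, 0 < ψ p) {f g : α → ℝ}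
    (hf : AEStronglyMeasurable f μ) (hg : AEStronglyMeasurable g μ) :
    GNorm μ a b ψ (f - g) ≤ GNorm μ a b ψ f + GNorm μ a b ψ g := by
  refine (GNorm_le_iff hψ).2 fun p hp => ?_
  calc eLpNorm (f - g) (ENNReal.ofReal p) μ
      ≤ eLpNorm f (ENNReal.ofReal p) μ + eLpNorm g (ENNReal.ofReal p) μ :=
        eLpNorm_sub_le hf hg (ENNReal.one_le_ofReal.2 (ha.trans hp.1.le))
    _ ≤ (GNorm μ a b ψ f + GNorm μ a b ψ g) * ENNReal.ofReal (ψ p) := by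
        rw [add_mul]
        exact add_le_add (eLpNorm_le_GNorm_mul hψ f hp) (eLpNorm_le_GNorm_mul hψ g hp)

theorem GNorm_le_of_ae_tendsto (hψ : ∀ p ∈ expSet a b, 0 < ψ p) {g : ℕ → α → ℝ}
    {g_lim : α → ℝ} (hg : ∀ k, AEStronglyMeasurable (g k) μ)
    (hlim : ∀ᵐ x ∂μ, Tendsto (fun k => g k x) atTop (𝓝 (g_lim x))) {C : ℝ≥0∞}
    (hC : ∀ᶠ k in atTop, GNorm μ a b ψ (g k) ≤ C) : GNorm μ a b ψ g_lim ≤ C := by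
  refine (GNorm_le_iff hψ).2 fun p hp => ?_
  refine (Lp.eLpNorm_lim_le_liminf_eLpNorm hg g_lim hlim).trans ?_
  refine liminf_le_of_frequently_le' (hC.mono fun k hk => ?_).frequently
  exact (GNorm_le_iff hψ).1 hk p hp

theorem tendsto_GNorm_sub_of_cauchy {f : ℕ → α → ℝ}
    (hcauchy : ∀ ε : ℝ, 0 < ε → ∃ N : ℕ, ∀ m ≥ N, ∀ n ≥ N,
      GNorm μ a b ψ (fun x => f m x - f n x) < ENNReal.ofReal ε) :
    Tendsto (fun mn : ℕ × ℕ => GNorm μ a b ψ (f mn.1 - f mn.2)) atTop (𝓝 0) := by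
  refine ENNReal.tendsto_nhds_zero.2 fun ε hε => ?_
  obtain ⟨r, -, hr0, hrε⟩ := ENNReal.lt_iff_exists_real_btwn.1 hε
  obtain ⟨N, hN⟩ := hcauchy r (ENNReal.ofReal_pos.1 hr0)
  exact (eventually_ge_atTop (N, N)).mono fun mn h => ((hN _ h.1 _ h.2).trans hrε).le

end GrandLebesgue

theorem complete_GNorm_general {α : Type*} [MeasurableSpace α] (μ : Measure α)
    (a : ℝ) (b : ℝ≥0∞) (ha : 1 ≤ a) (hab : ENNReal.ofReal a < b)
    (ψ : ℝ → ℝ) (hψ : IsEPsi a b ψ)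
    (f : ℕ → α → ℝ)
    (hmem : ∀ n, AEStronglyMeasurable (f n) μ ∧ GNorm μ a b ψ (f n) < ⊤)
    (hcauchy : ∀ ε : ℝ, 0 < ε → ∃ N : ℕ, ∀ m ≥ N, ∀ n ≥ N,
      GNorm μ a b ψ (fun x => f m x - f n x) < ENNReal.ofReal ε) :
    ∃ F : α → ℝ, AEStronglyMeasurable F μ ∧ GNorm μ a b ψ F < ⊤ ∧
      Tendsto (fun n => GNorm μ a b ψ (fun x => f n x - F x)) atTop (𝓝 0) := by
  have hψpos : ∀ p ∈ expSet a b, 0 < ψ p := fun p hp => one_pos.trans_le (hψ.2.1 p hp)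
  have hcau := tendsto_GNorm_sub_of_cauchy hcauchy
  obtain ⟨p₀, hp₀⟩ := expSet_nonempty hab
  have hcauLp : Tendsto (fun mn : ℕ × ℕ => eLpNorm (f mn.1 - f mn.2) (ENNReal.ofReal p₀) μ)
      atTop (𝓝 0) := by
    refine tendsto_of_tendsto_of_tendsto_of_le_of_le tendsto_const_nhds
      ?_ (fun _ => zero_le) fun mn => eLpNorm_le_GNorm_mul hψpos _ hp₀
    simpa only [zero_mul] using ENNReal.Tendsto.mul_const hcau (.inr ENNReal.ofReal_ne_top)
  obtain ⟨F, hF, ns, hns, hlim⟩ := exists_subseq_ae_tendsto_of_tendsto_eLpNorm_sub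
    (ENNReal.one_le_ofReal.2 (ha.trans hp₀.1.le))
    (fun n => memLp_of_GNorm_lt_top hψpos (hmem n).1 (hmem n).2 hp₀) hcauLp
  have hconv : ∀ ε > 0, ∀ᶠ m in atTop, GNorm μ a b ψ (f m - F) ≤ ε := fun ε hε => by
    have hsmall : ∀ᶠ m in atTop, ∀ᶠ n in atTop, GNorm μ a b ψ (f m - f n) ≤ ε := by
      rw [← prod_atTop_atTop_eq] at hcau
      exact (ENNReal.tendsto_nhds_zero.1 hcau ε hε).curry
    refine hsmall.mono fun m hm => GNorm_le_of_ae_tendsto hψpos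
      (fun k => (hmem m).1.sub (hmem (ns k)).1) ?_ (hns.tendsto_atTop.eventually hm)
    exact hlim.mono fun x hx => tendsto_const_nhds.sub hx
  refine ⟨F, hF, ?_, ENNReal.tendsto_nhds_zero.2 hconv⟩
  obtain ⟨N, hN⟩ := (hconv 1 one_pos).exists
  calc GNorm μ a b ψ F = GNorm μ a b ψ (f N - (f N - F)) := by rw [sub_sub_cancel]
    _ ≤ GNorm μ a b ψ (f N) + GNorm μ a b ψ (f N - F) :=
        GNorm_sub_le ha hψpos (hmem N).1 ((hmem N).1.sub hF)
    _ < ⊤ := ENNReal.add_lt_top.2 ⟨(hmem N).2, hN.trans_lt ENNReal.one_lt_top⟩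

/-- **Completeness of `G(ψ)`.** Every sequence in `G(ψ)` that is Cauchy in the
norm `‖·‖_{G(ψ)}` converges in `G(ψ)`; hence `G(ψ)` is a Banach space. -/
theorem complete_GNorm {α : Type*} [MeasurableSpace α] (μ : Measure α) [SigmaFinite μ]
    (a : ℝ) (b : ℝ≥0∞) (ha : 1 ≤ a) (hab : ENNReal.ofReal a < b)
    (ψ : ℝ → ℝ) (hψ : IsEPsi a b ψ)
    (f : ℕ → α → ℝ)
    (hmem : ∀ n, AEStronglyMeasurable (f n) μ ∧ GNorm μ a b ψ (f n) < ⊤)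
    (hcauchy : ∀ ε : ℝ, 0 < ε → ∃ N : ℕ, ∀ m ≥ N, ∀ n ≥ N,
      GNorm μ a b ψ (fun x => f m x - f n x) < ENNReal.ofReal ε) :
    ∃ F : α → ℝ, AEStronglyMeasurable F μ ∧ GNorm μ a b ψ F < ⊤ ∧
      Tendsto (fun n => GNorm μ a b ψ (fun x => f n x - F x)) atTop (𝓝 0) :=
  complete_GNorm_general μ a b ha hab ψ hψ f hmem hcauchy
end
end

section
/- If ψ ∈ EΨ(a,b) (in particular lim_{p→b⁻} ψ(p) = ∞, where for b = ∞ this means lim_{p→∞} ψ(p) = ∞), then the fundamental function of G(ψ) vanishes at the origin: φ(G(ψ), δ) = sup_{p ∈ (a,b)} δ^{1/p}/ψ(p) → 0 as δ → 0⁺. -/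
noncomputable section

open MeasureTheory Filter Set Topology
open scoped ENNReal NNReal

/-! Split the exponents at a threshold `C`. For `p ≤ C` the term `δ^{1/p}/ψ(p)` is at most
`δ^{1/C}`, because `ψ ≥ 1` and `δ ≤ 1`; for `p > C` it is at most `1/M`, where `C` is chosen so
that `ψ ≥ M` on `(C, b)`, as `ψ(b-0) = ∞` allows. Hence `φ(δ) ≤ max (δ^{1/C}) (1/M)`, whose
upper limit at `0⁺` is `1/M`, and `M` is arbitrary. -/

theorem exists_forall_le_of_tendsto_atBbelow {b : ℝ≥0∞} {ψ : ℝ → ℝ}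
    (hψ : Tendsto ψ (atBbelow b) atTop) (M : ℝ) :
    ∃ C > 0, ∀ p, C < p → ENNReal.ofReal p < b → M ≤ ψ p := by
  rcases eq_zero_or_pos b with rfl | hb
  · exact ⟨1, one_pos, fun p _ hp => absurd hp not_lt_zero⟩
  have hev : ∀ᶠ q in 𝓝[<] b, ∀ p, ENNReal.ofReal p = q → M ≤ ψ p := by
    rw [← eventually_comap]
    exact hψ.eventually (eventually_ge_atTop M)
  obtain ⟨l, hlb, hl⟩ := (mem_nhdsLT_iff_exists_Ioo_subset' hb).mp hev
  have hl_top : l ≠ ⊤ := (mem_Iio.mp hlb).ne_top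
  refine ⟨max l.toReal 1, by positivity, fun p hCp hpb => hl ⟨?_, hpb⟩ p rfl⟩
  exact (ENNReal.lt_ofReal_iff_toReal_lt hl_top).mpr ((le_max_left _ _).trans_lt hCp)

theorem fundR_nonneg {a : ℝ} {b : ℝ≥0∞} {ψ : ℝ → ℝ} (hψ : ∀ p ∈ expSet a b, 0 ≤ ψ p)
    {δ : ℝ} (hδ : 0 ≤ δ) : 0 ≤ fundR a b ψ δ :=
  Real.iSup_nonneg fun p => div_nonneg (Real.rpow_nonneg hδ _) (hψ p p.2)

theorem fundR_le_max {a : ℝ} {b : ℝ≥0∞} {ψ : ℝ → ℝ} (ha : 0 ≤ a)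
    (hψ : ∀ p ∈ expSet a b, 1 ≤ ψ p) {C M : ℝ} (hM : 0 < M)
    (hCM : ∀ p, C < p → ENNReal.ofReal p < b → M ≤ ψ p) {δ : ℝ} (hδ₀ : 0 < δ) (hδ₁ : δ ≤ 1) :
    fundR a b ψ δ ≤ max (δ ^ (1 / C)) M⁻¹ := by
  refine Real.iSup_le (fun ⟨p, hpa, hpb⟩ => ?_) (le_max_of_le_right (inv_nonneg.mpr hM.le))
  have hp : 0 < p := ha.trans_lt hpa
  rcases le_or_gt p C with hpC | hCp
  · refine le_max_of_le_left ?_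
    calc δ ^ (1 / p) / ψ p ≤ δ ^ (1 / p) :=
          div_le_self (Real.rpow_nonneg hδ₀.le _) (hψ p ⟨hpa, hpb⟩)
      _ ≤ δ ^ (1 / C) :=
          Real.rpow_le_rpow_of_exponent_ge hδ₀ hδ₁ (one_div_le_one_div_of_le hp hpC)
  · refine le_max_of_le_right ?_
    rw [← one_div]
    exact div_le_div₀ zero_le_one (Real.rpow_le_one hδ₀.le hδ₁ (by positivity)) hM
      (hCM p hCp hpb)

theorem tendsto_rpow_nhdsGT_zero {r : ℝ} (hr : 0 < r) :
    Tendsto (fun δ : ℝ => δ ^ r) (𝓝[>] 0) (𝓝 0) := by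
  have h := (Real.continuousAt_rpow_const 0 r (Or.inr hr.le)).tendsto
  rw [Real.zero_rpow hr.ne'] at h
  exact h.mono_left nhdsWithin_le_nhds

theorem fundamental_function_vanishes_at_zero_general
    (a : ℝ) (b : ℝ≥0∞) (ha : 1 ≤ a)
    (ψ : ℝ → ℝ) (hψ : IsEPsi a b ψ) :
    Tendsto (fun δ : ℝ => fundR a b ψ δ) (𝓝[>] (0 : ℝ)) (𝓝 0) := by
  obtain ⟨-, hψ_one, hψ_lim⟩ := hψ
  have hδ : ∀ᶠ δ in 𝓝[>] (0 : ℝ), δ ∈ Ioc 0 1 := Ioc_mem_nhdsGT one_pos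
  refine tendsto_order.2 ⟨fun ε hε => hδ.mono fun δ hδ => hε.trans_le ?_, fun ε hε => ?_⟩
  · exact fundR_nonneg (fun p hp => zero_le_one.trans (hψ_one p hp)) hδ.1.le
  obtain ⟨C, hC, hCM⟩ := exists_forall_le_of_tendsto_atBbelow hψ_lim (2 / ε)
  have hsmall : ∀ᶠ δ in 𝓝[>] (0 : ℝ), δ ^ (1 / C) < ε :=
    (tendsto_rpow_nhdsGT_zero (one_div_pos.mpr hC)).eventually (gt_mem_nhds hε)
  filter_upwards [hδ, hsmall] with δ hδ hδε
  calc fundR a b ψ δ ≤ max (δ ^ (1 / C)) (2 / ε)⁻¹ :=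
        fundR_le_max (by linarith) hψ_one (by positivity) hCM hδ.1 hδ.2
    _ < ε := max_lt hδε (by rw [inv_div]; linarith)

/-- If `ψ ∈ EΨ(a,b)` (in particular `ψ(p) → ∞` as `p → b⁻`), then the
fundamental function of `G(ψ)` vanishes at the origin:
`φ(G(ψ), δ) = sup_{p ∈ (a,b)} δ^{1/p}/ψ(p) → 0` as `δ → 0⁺`. -/
theorem fundamental_function_vanishes_at_zero
    (a : ℝ) (b : ℝ≥0∞) (ha : 1 ≤ a) (hab : ENNReal.ofReal a < b)
    (ψ : ℝ → ℝ) (hψ : IsEPsi a b ψ) :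
    Tendsto (fun δ : ℝ => fundR a b ψ δ) (𝓝[>] (0 : ℝ)) (𝓝 0) :=
  fundamental_function_vanishes_at_zero_general a b ha ψ hψ
end
end

section
/- Let ψ ∈ Ψ(a,b) with b < ∞. Then the fundamental function φ(s) = sup_{p ∈ (a,b)} s^{1/p}/ψ(p) of G(ψ) satisfies lim_{s → 0⁺} (log φ(s))/(log s) = 1/b. -/
noncomputable section

open MeasureTheory Filter Set Topology
open scoped ENNReal NNReal

/-!
Write `ψ(p) = ‖f‖_p`. If `|f| < 1` a.e., then `‖f‖_q ≤ max 1 ‖f‖_p` for `q ≥ p`, contradicting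
`ψ(b-0) = ∞`; so `{|f| ≥ 1}` has positive measure and Chebyshev's inequality bounds `ψ` below by
some `c > 0` on `(a,b)`. For `0 < s < 1` this gives `φ(s) ≤ s^{1/b}/c`, i.e.
`log φ(s)/log s ≥ 1/b - log c/log s`, while each single `p ∈ (a,b)` gives
`log φ(s)/log s ≤ 1/p - log ψ(p)/log s`. Let `s → 0⁺`, then `p → b⁻`.
-/

section LpNormLowerBound

variable {α E : Type*} [MeasurableSpace α] [NormedAddCommGroup E] {μ : Measure α} {f : α → E}

lemma eLpNorm_ofReal_eq_eLpNorm' {p : ℝ} (hp : 0 < p) :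
    eLpNorm f (ENNReal.ofReal p) μ = eLpNorm' f p μ := by
  rw [eLpNorm_eq_eLpNorm' (ENNReal.ofReal_pos.2 hp).ne' ENNReal.ofReal_ne_top,
    ENNReal.toReal_ofReal hp.le]

lemma eLpNorm'_le_max_one_of_ae_enorm_le_one {p q : ℝ} (hp : 0 < p) (hpq : p ≤ q)
    (hf : ∀ᵐ x ∂μ, ‖f x‖ₑ ≤ 1) : eLpNorm' f q μ ≤ max 1 (eLpNorm' f p μ) := by
  have hq : 0 < q := hp.trans_le hpq
  have hint : ∫⁻ x, ‖f x‖ₑ ^ q ∂μ ≤ ∫⁻ x, ‖f x‖ₑ ^ p ∂μ :=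
    lintegral_mono_ae (hf.mono fun x hx => ENNReal.rpow_le_rpow_of_exponent_ge hx hpq)
  calc eLpNorm' f q μ = (∫⁻ x, ‖f x‖ₑ ^ q ∂μ) ^ (1 / q) := eLpNorm'_eq_lintegral_enorm f q μ
    _ ≤ (eLpNorm' f p μ ^ p) ^ (1 / q) := by
      rw [← lintegral_rpow_enorm_eq_rpow_eLpNorm' hp]
      gcongr
    _ = eLpNorm' f p μ ^ (p / q) := by rw [← ENNReal.rpow_mul, mul_one_div]
    _ ≤ max 1 (eLpNorm' f p μ) := by
      rcases le_total (eLpNorm' f p μ) 1 with h | h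
      · exact (ENNReal.rpow_le_one h (by positivity)).trans (le_max_left _ _)
      · calc eLpNorm' f p μ ^ (p / q) ≤ eLpNorm' f p μ ^ (1 : ℝ) :=
              ENNReal.rpow_le_rpow_of_exponent_le h ((div_le_one hq).2 hpq)
          _ ≤ max 1 (eLpNorm' f p μ) := by rw [ENNReal.rpow_one]; exact le_max_right _ _

lemma measure_one_le_enorm_rpow_inv_le_eLpNorm' {p : ℝ} (hp : 0 < p)
    (hf : AEStronglyMeasurable f μ) : μ {x | 1 ≤ ‖f x‖ₑ} ^ p⁻¹ ≤ eLpNorm' f p μ := by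
  have h := mul_meas_ge_le_pow_eLpNorm' μ (ENNReal.ofReal_pos.2 hp).ne' ENNReal.ofReal_ne_top hf 1
  rw [ENNReal.one_rpow, one_mul, eLpNorm_ofReal_eq_eLpNorm' hp, ENNReal.toReal_ofReal hp.le] at h
  calc μ {x | 1 ≤ ‖f x‖ₑ} ^ p⁻¹ ≤ (eLpNorm' f p μ ^ p) ^ p⁻¹ := by gcongr
    _ = eLpNorm' f p μ := ENNReal.rpow_rpow_inv hp.ne' _

lemma min_measure_one_le_enorm_rpow_inv_le_eLpNorm' {a p : ℝ} (ha : 0 < a) (hap : a ≤ p)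
    (hf : AEStronglyMeasurable f μ) : min (μ {x | 1 ≤ ‖f x‖ₑ}) 1 ^ a⁻¹ ≤ eLpNorm' f p μ :=
  calc min (μ {x | 1 ≤ ‖f x‖ₑ}) 1 ^ a⁻¹ ≤ min (μ {x | 1 ≤ ‖f x‖ₑ}) 1 ^ p⁻¹ :=
        ENNReal.rpow_le_rpow_of_exponent_ge (min_le_right _ _) (inv_anti₀ ha hap)
    _ ≤ μ {x | 1 ≤ ‖f x‖ₑ} ^ p⁻¹ :=
        ENNReal.rpow_le_rpow (min_le_left _ _) (inv_nonneg.2 (ha.le.trans hap))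
    _ ≤ eLpNorm' f p μ := measure_one_le_enorm_rpow_inv_le_eLpNorm' (ha.trans_le hap) hf

lemma measure_one_le_enorm_ne_zero_of_tendsto_top {p B : ℝ} (hp : 0 < p) (hpB : p < B)
    (hfin : eLpNorm' f p μ ≠ ⊤) (hlim : Tendsto (fun q => eLpNorm' f q μ) (𝓝[<] B) (𝓝 ⊤)) :
    μ {x | 1 ≤ ‖f x‖ₑ} ≠ 0 := by
  intro hS
  have hf : ∀ᵐ x ∂μ, ‖f x‖ₑ ≤ 1 := by
    filter_upwards [measure_eq_zero_iff_ae_notMem.1 hS] with x hx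
    exact (not_le.1 hx).le
  have hbounded : ∀ᶠ q in 𝓝[<] B, eLpNorm' f q μ ≤ max 1 (eLpNorm' f p μ) := by
    filter_upwards [Ioo_mem_nhdsLT hpB] with q hq
    exact eLpNorm'_le_max_one_of_ae_enorm_le_one hp hq.1.le hf
  have hlarge := hlim.eventually_const_lt (max_lt ENNReal.one_lt_top hfin.lt_top)
  obtain ⟨q, hq_le, hq_lt⟩ := (hbounded.and hlarge).exists
  exact hq_le.not_gt hq_lt

lemma exists_pos_le_eLpNorm'_of_tendsto_top {a B : ℝ} (ha : 0 < a) (hf : AEStronglyMeasurable f μ)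
    (hfin : ∃ p ∈ Ioo 0 B, eLpNorm' f p μ ≠ ⊤)
    (hlim : Tendsto (fun q => eLpNorm' f q μ) (𝓝[<] B) (𝓝 ⊤)) :
    ∃ c : ℝ, 0 < c ∧ ∀ p, a ≤ p → ENNReal.ofReal c ≤ eLpNorm' f p μ := by
  obtain ⟨p₀, ⟨hp₀, hp₀B⟩, hp₀fin⟩ := hfin
  set c := min (μ {x | 1 ≤ ‖f x‖ₑ}) 1 ^ a⁻¹
  have hmin_top : min (μ {x | 1 ≤ ‖f x‖ₑ}) 1 ≠ ⊤ :=
    ((min_le_right _ 1).trans_lt ENNReal.one_lt_top).ne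
  have hc_top : c ≠ ⊤ := ENNReal.rpow_ne_top_of_nonneg (inv_nonneg.2 ha.le) hmin_top
  have hc_pos : 0 < c := ENNReal.rpow_pos
    (lt_min (measure_one_le_enorm_ne_zero_of_tendsto_top hp₀ hp₀B hp₀fin hlim).bot_lt one_pos)
    hmin_top
  refine ⟨c.toReal, ENNReal.toReal_pos hc_pos.ne' hc_top, fun p hap => ?_⟩
  rw [ENNReal.ofReal_toReal hc_top]
  exact min_measure_one_le_enorm_rpow_inv_le_eLpNorm' ha hap hf

end LpNormLowerBound

lemma expSet_eq_Ioo {a : ℝ} {b : ℝ≥0∞} (ha : 0 ≤ a) (hb : b ≠ ⊤) :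
    expSet a b = Ioo a b.toReal := by
  ext p
  exact and_congr_right fun hap => ENNReal.ofReal_lt_iff_lt_toReal (ha.trans hap.le) hb

lemma nhdsLT_toReal_le_atBbelow {b : ℝ≥0∞} (hb0 : b ≠ 0) (hb : b ≠ ⊤) :
    𝓝[<] b.toReal ≤ atBbelow b := by
  refine Tendsto.le_comap (tendsto_nhdsWithin_iff.2 ⟨?_, ?_⟩)
  · have h := ENNReal.continuous_ofReal.continuousWithinAt (s := Iio b.toReal) (x := b.toReal)
    rwa [ContinuousWithinAt, ENNReal.ofReal_toReal hb] at h
  · filter_upwards [self_mem_nhdsWithin] with p hp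
    rw [mem_Iio, ← ENNReal.ofReal_toReal hb]
    exact ENNReal.ofReal_lt_ofReal_iff'.2 ⟨hp, ENNReal.toReal_pos hb0 hb⟩

lemma IsPsi.exists_pos_le {α : Type*} [MeasurableSpace α] {μ : Measure α} {a : ℝ} {b : ℝ≥0∞}
    {ψ : ℝ → ℝ} (hψ : IsPsi μ a b ψ) (ha : 0 < a) (hab : ENNReal.ofReal a < b) (hb : b ≠ ⊤) :
    ∃ c, 0 < c ∧ ∀ p ∈ expSet a b, c ≤ ψ p := by
  obtain ⟨-, hpos, htend, f, hf, hrep⟩ := hψ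
  rw [expSet_eq_Ioo ha.le hb] at hpos hrep ⊢
  have haB : a < b.toReal := (ENNReal.ofReal_lt_iff_lt_toReal ha.le hb).1 hab
  have hnorm : ∀ p ∈ Ioo a b.toReal, eLpNorm' f p μ = ENNReal.ofReal (ψ p) := fun p hp => by
    rw [← eLpNorm_ofReal_eq_eLpNorm' (ha.trans hp.1), hrep p hp]
  have hlim : Tendsto (fun p => eLpNorm' f p μ) (𝓝[<] b.toReal) (𝓝 ⊤) := by
    refine (ENNReal.tendsto_ofReal_atTop.comp
      (htend.mono_left (nhdsLT_toReal_le_atBbelow hab.ne_bot hb))).congr' ?_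
    filter_upwards [Ioo_mem_nhdsLT haB] with p hp using (hnorm p hp).symm
  obtain ⟨p₀, hp₀⟩ := exists_between haB
  obtain ⟨c, hc, hle⟩ := exists_pos_le_eLpNorm'_of_tendsto_top ha hf
    ⟨p₀, ⟨ha.trans hp₀.1, hp₀.2⟩, by rw [hnorm p₀ hp₀]; exact ENNReal.ofReal_ne_top⟩ hlim
  refine ⟨c, hc, fun p hp => ?_⟩
  have h := hle p hp.1.le
  rwa [hnorm p hp, ENNReal.ofReal_le_ofReal_iff (hpos p hp).le] at h

/-- `fundR a b ψ` is `fundOn (expSet a b) ψ`. -/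
def fundOn (P : Set ℝ) (ψ : ℝ → ℝ) (s : ℝ) : ℝ :=
  ⨆ p : P, s ^ (1 / (p : ℝ)) / ψ p

lemma rpow_one_div_div_le {p B c s : ℝ} {ψ : ℝ → ℝ} (hp : 0 < p) (hpB : p ≤ B) (hc : 0 < c)
    (hcψ : c ≤ ψ p) (hs0 : 0 < s) (hs1 : s ≤ 1) : s ^ (1 / p) / ψ p ≤ s ^ B⁻¹ / c := by
  have hexp : B⁻¹ ≤ 1 / p := by rw [one_div]; exact inv_anti₀ hp hpB
  exact div_le_div₀ (by positivity) (Real.rpow_le_rpow_of_exponent_ge hs0 hs1 hexp) hc hcψ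

lemma tendsto_sub_div_log (x y : ℝ) :
    Tendsto (fun s => x - y / Real.log s) (𝓝[>] 0) (𝓝 x) := by
  simpa using tendsto_const_nhds.sub (tendsto_const_nhds.div_atBot Real.tendsto_log_nhdsGT_zero)

section FundOn

variable {P : Set ℝ} {ψ : ℝ → ℝ} {B c s : ℝ}

lemma fundOn_le [Nonempty P] (hP : ∀ p ∈ P, 0 < p) (hPB : ∀ p ∈ P, p ≤ B) (hc : 0 < c)
    (hcψ : ∀ p ∈ P, c ≤ ψ p) (hs0 : 0 < s) (hs1 : s ≤ 1) : fundOn P ψ s ≤ s ^ B⁻¹ / c :=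
  ciSup_le fun p => rpow_one_div_div_le (hP p p.2) (hPB p p.2) hc (hcψ p p.2) hs0 hs1

lemma rpow_one_div_div_le_fundOn (hP : ∀ p ∈ P, 0 < p) (hPB : ∀ p ∈ P, p ≤ B) (hc : 0 < c)
    (hcψ : ∀ p ∈ P, c ≤ ψ p) (hs0 : 0 < s) (hs1 : s ≤ 1) {p : ℝ} (hp : p ∈ P) :
    s ^ (1 / p) / ψ p ≤ fundOn P ψ s := by
  refine le_ciSup (f := fun q : P => s ^ (1 / (q : ℝ)) / ψ q) ⟨s ^ B⁻¹ / c, ?_⟩ ⟨p, hp⟩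
  rintro _ ⟨q, rfl⟩
  exact rpow_one_div_div_le (hP q q.2) (hPB q q.2) hc (hcψ q q.2) hs0 hs1

lemma inv_sub_div_log_le_log_fundOn_div_log [Nonempty P] (hP : ∀ p ∈ P, 0 < p)
    (hPB : ∀ p ∈ P, p ≤ B) (hc : 0 < c) (hcψ : ∀ p ∈ P, c ≤ ψ p) (hs0 : 0 < s) (hs1 : s < 1) :
    B⁻¹ - Real.log c / Real.log s ≤ Real.log (fundOn P ψ s) / Real.log s := by
  obtain ⟨p, hp⟩ := ‹Nonempty P›
  have hlog : Real.log s < 0 := Real.log_neg hs0 hs1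
  have hpos : 0 < fundOn P ψ s := (div_pos (Real.rpow_pos_of_pos hs0 _)
    (hc.trans_le (hcψ p hp))).trans_le (rpow_one_div_div_le_fundOn hP hPB hc hcψ hs0 hs1.le hp)
  rw [le_div_iff_of_neg hlog, sub_mul, div_mul_cancel₀ _ hlog.ne]
  calc Real.log (fundOn P ψ s) ≤ Real.log (s ^ B⁻¹ / c) :=
        Real.log_le_log hpos (fundOn_le hP hPB hc hcψ hs0 hs1.le)
    _ = B⁻¹ * Real.log s - Real.log c := by
        rw [Real.log_div (by positivity) hc.ne', Real.log_rpow hs0]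

lemma log_fundOn_div_log_le (hP : ∀ p ∈ P, 0 < p) (hPB : ∀ p ∈ P, p ≤ B) (hc : 0 < c)
    (hcψ : ∀ p ∈ P, c ≤ ψ p) (hs0 : 0 < s) (hs1 : s < 1) {p : ℝ} (hp : p ∈ P) :
    Real.log (fundOn P ψ s) / Real.log s ≤ p⁻¹ - Real.log (ψ p) / Real.log s := by
  have hlog : Real.log s < 0 := Real.log_neg hs0 hs1
  have hψp : 0 < ψ p := hc.trans_le (hcψ p hp)
  rw [div_le_iff_of_neg hlog, sub_mul, div_mul_cancel₀ _ hlog.ne]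
  calc p⁻¹ * Real.log s - Real.log (ψ p) = Real.log (s ^ (1 / p) / ψ p) := by
        rw [Real.log_div (by positivity) hψp.ne', Real.log_rpow hs0, one_div]
    _ ≤ Real.log (fundOn P ψ s) :=
        Real.log_le_log (by positivity) (rpow_one_div_div_le_fundOn hP hPB hc hcψ hs0 hs1.le hp)

theorem tendsto_log_fundOn_div_log (hP : ∀ p ∈ P, 0 < p) (hB : IsLUB P B) (hc : 0 < c)
    (hcψ : ∀ p ∈ P, c ≤ ψ p) :
    Tendsto (fun s => Real.log (fundOn P ψ s) / Real.log s) (𝓝[>] 0) (𝓝 B⁻¹) := by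
  have : Nonempty P := hB.nonempty.to_subtype
  have hPB : ∀ p ∈ P, p ≤ B := fun p hp => hB.1 hp
  have hs : Ioo (0 : ℝ) 1 ∈ 𝓝[>] 0 := Ioo_mem_nhdsGT one_pos
  refine tendsto_order.2 ⟨fun l hl => ?_, fun u hu => ?_⟩
  · filter_upwards [hs, (tendsto_sub_div_log B⁻¹ (Real.log c)).eventually_const_lt hl]
      with s ⟨hs0, hs1⟩ hls
    exact hls.trans_le (inv_sub_div_log_le_log_fundOn_div_log hP hPB hc hcψ hs0 hs1)
  · have hB0 : 0 < B := (hP _ hB.nonempty.some_mem).trans_le (hPB _ hB.nonempty.some_mem)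
    obtain ⟨p, hp, hup, -⟩ := hB.exists_between (inv_lt_of_inv_lt₀ hB0 hu)
    have hpu : p⁻¹ < u := inv_lt_of_inv_lt₀ ((inv_pos.2 hB0).trans hu) hup
    filter_upwards [hs, (tendsto_sub_div_log p⁻¹ (Real.log (ψ p))).eventually_lt_const hpu]
      with s ⟨hs0, hs1⟩ hls
    exact (log_fundOn_div_log_le hP hPB hc hcψ hs0 hs1 hp).trans_lt hls

end FundOn

theorem fund_log_limit_at_zero_general {α : Type*} [MeasurableSpace α] (μ : Measure α)
    (a : ℝ) (b : ℝ≥0∞) (ha : 1 ≤ a) (hab : ENNReal.ofReal a < b) (hb : b ≠ ⊤)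
    (ψ : ℝ → ℝ) (hψ : IsPsi μ a b ψ) :
    Tendsto (fun s : ℝ => Real.log (fundR a b ψ s) / Real.log s)
      (𝓝[>] (0 : ℝ)) (𝓝 (b⁻¹.toReal)) := by
  have ha0 : 0 < a := zero_lt_one.trans_le ha
  obtain ⟨c, hc, hcψ⟩ := hψ.exists_pos_le ha0 hab hb
  have hlub : IsLUB (expSet a b) b.toReal := by
    rw [expSet_eq_Ioo ha0.le hb]
    exact isLUB_Ioo ((ENNReal.ofReal_lt_iff_lt_toReal ha0.le hb).1 hab)
  rw [ENNReal.toReal_inv]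
  exact tendsto_log_fundOn_div_log (fun p hp => ha0.trans hp.1) hlub hc hcψ

/-- **Lemma 3, behaviour at `0⁺`.** Let `ψ ∈ Ψ(a,b)` with `b < ∞`. Then the
fundamental function `φ(s) = sup_{p ∈ (a,b)} s^{1/p}/ψ(p)` of `G(ψ)` satisfies
`log φ(s) / log s → 1/b` as `s → 0⁺`. -/
theorem fund_log_limit_at_zero {α : Type*} [MeasurableSpace α] (μ : Measure α) [SigmaFinite μ]
    (a : ℝ) (b : ℝ≥0∞) (ha : 1 ≤ a) (hab : ENNReal.ofReal a < b) (hb : b ≠ ⊤)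
    (ψ : ℝ → ℝ) (hψ : IsPsi μ a b ψ) :
    Tendsto (fun s : ℝ => Real.log (fundR a b ψ s) / Real.log s)
      (𝓝[>] (0 : ℝ)) (𝓝 (b⁻¹.toReal)) :=
  fund_log_limit_at_zero_general μ a b ha hab hb ψ hψ
end
end

section
/- (Theorem 1.1.A) Let ψ, ζ, ν ∈ EΨ(a,b) with ζ = ψ·ν. For every positive vector s = (s(1),…,s(k)), the dilation operator σ_s is bounded from G(ψ) into G(ζ), and its operator norm satisfies ‖σ_s‖(G(ψ) → G(ζ)) ≤ φ(G(ν), s^{d+θ}), where s^{d+θ} = ∏_{r=1}^k s(r)^{d(r)+θ(r)}. -/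
noncomputable section

open MeasureTheory Filter Set Topology
open scoped ENNReal NNReal

/-- The space `X = ℝ₊^{d(1)} × ⋯ × ℝ₊^{d(k)}`, modelled as the dependent product
`∀ r : Fin k, (Fin (d r) → ℝ)`; the restriction to the positive orthant is encoded
in the measure `wMeasure` below. -/
abbrev PiX (k : ℕ) (d : Fin k → ℕ) : Type := ∀ r : Fin k, Fin (d r) → ℝ

/-- The positive orthant of `X`. -/
def orthant (k : ℕ) (d : Fin k → ℕ) : Set (PiX k d) := {x | ∀ r i, 0 < x r i}

/-- The weighted measure `μ(V) = ∫_V W(x) dx` on `X = ℝ₊^{d(1)} × ⋯ × ℝ₊^{d(k)}`. -/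
def wMeasure (k : ℕ) (d : Fin k → ℕ) (W : PiX k d → ℝ) : Measure (PiX k d) :=
  (volume.restrict (orthant k d)).withDensity fun x => ENNReal.ofReal (W x)

/-- The dilation operator `(σ_s f)(x) = f(x(d(1))/s(1), …, x(d(k))/s(k))`. -/
def dilate {k : ℕ} {d : Fin k → ℕ} (s : Fin k → ℝ) (f : PiX k d → ℝ) : PiX k d → ℝ :=
  fun x => f fun r i => x r i / s r

/-- `s^e = ∏_{r=1}^k s(r)^{e(r)}`. -/
def sPow {k : ℕ} (s e : Fin k → ℝ) : ℝ := ∏ r, s r ^ e r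

/-- The operator norm `‖σ_s‖(G(ψ) → G(ζ))` of the dilation operator. -/
def dilOpNorm {k : ℕ} {d : Fin k → ℕ} (μ : Measure (PiX k d)) (a : ℝ) (b : ℝ≥0∞)
    (ψ ζ : ℝ → ℝ) (s : Fin k → ℝ) : ℝ≥0∞ :=
  ⨆ f : {f : PiX k d → ℝ // AEStronglyMeasurable f μ},
    GNorm μ a b ζ (dilate s f.1) / GNorm μ a b ψ f.1

/-! The substitution `x ↦ x/s` multiplies Lebesgue measure by `s^d`, preserves the orthant, and
by homogeneity turns the weight `W(x)` into `s^θ W(x/s)`; so it pushes `μ` forward to `s^{d+θ} μ`,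
whence `‖σ_s f‖_p = (s^{d+θ})^{1/p} ‖f‖_p`. Dividing by `ζ(p) = ψ(p) ν(p)` splits the quotient
into `((s^{d+θ})^{1/p} / ν(p)) · (‖f‖_p / ψ(p))`, and the two factors are bounded by their
suprema over `p`. -/

def coordDiv {ι : Type*} {κ : ι → Type*} (s : ι → ℝ) (x : ∀ i, κ i → ℝ) : ∀ i, κ i → ℝ :=
  fun i j => x i j / s i

theorem MeasureTheory.Measure.pi_nnreal_smul {ι : Type*} [Fintype ι] {α : ι → Type*}
    [∀ i, MeasurableSpace (α i)] (μ : ∀ i, Measure (α i)) [∀ i, SigmaFinite (μ i)]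
    (c : ι → ℝ≥0) :
    Measure.pi (fun i => c i • μ i) = (∏ i, c i) • Measure.pi μ := by
  refine Measure.pi_eq fun t _ => ?_
  simp only [Measure.smul_apply, Measure.pi_pi, ENNReal.smul_def, smul_eq_mul,
    ENNReal.ofNNReal_finsetProd, Finset.prod_mul_distrib]

theorem Real.measurePreserving_div_const {a : ℝ} (ha : 0 < a) :
    MeasurePreserving (· / a) volume (a.toNNReal • volume) := by
  refine ⟨measurable_div_const a, ?_⟩
  simp_rw [div_eq_mul_inv]
  rw [Real.map_volume_mul_right (inv_ne_zero ha.ne'), inv_inv, abs_of_pos ha]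
  rfl

theorem measurePreserving_coordDiv {ι : Type*} [Fintype ι] {κ : ι → Type*}
    [∀ i, Fintype (κ i)] {s : ι → ℝ} (hs : ∀ i, 0 < s i) :
    MeasurePreserving (coordDiv (κ := κ) s) volume
      (ENNReal.ofReal (∏ i, s i ^ Fintype.card (κ i)) • volume) := by
  have hrow : ∀ i, MeasurePreserving (fun y : κ i → ℝ => fun j => y j / s i) volume
      ((s i ^ Fintype.card (κ i)).toNNReal • volume) := fun i => by
    have h := measurePreserving_pi _ _ fun _ : κ i => Real.measurePreserving_div_const (hs i)
    rwa [Measure.pi_nnreal_smul, Finset.prod_const, Finset.card_univ,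
      ← Real.toNNReal_pow (hs i).le] at h
  have h := measurePreserving_pi _ _ hrow
  rwa [Measure.pi_nnreal_smul, ← Real.toNNReal_prod_of_nonneg fun i _ => by
    have := hs i; positivity] at h

theorem MeasureTheory.MeasurePreserving.withDensity_of_eq_const_mul_comp {α : Type*}
    [MeasurableSpace α] {ν : Measure α} {U : α → α} {C c : ℝ≥0∞}
    (hU : MeasurePreserving U ν (C • ν)) {w : α → ℝ≥0∞} (hw : Measurable w)
    (hwU : ∀ x, w x = c * w (U x)) :
    MeasurePreserving U (ν.withDensity w) ((c * C) • ν.withDensity w) := by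
  refine ⟨hU.measurable, Measure.ext fun A hA => ?_⟩
  rw [Measure.map_apply hU.measurable hA, withDensity_apply _ (hU.measurable hA),
    Measure.smul_apply, withDensity_apply _ hA, smul_eq_mul]
  calc ∫⁻ x in U ⁻¹' A, w x ∂ν = ∫⁻ x in U ⁻¹' A, c * w (U x) ∂ν := by simp_rw [← hwU]
    _ = c * ∫⁻ y in A, w y ∂(C • ν) := by
      rw [← (hU.restrict_preimage hA).lintegral_comp hw]
      exact lintegral_const_mul c (hw.comp hU.measurable)
    _ = c * C * ∫⁻ y in A, w y ∂ν := by
      rw [Measure.restrict_smul, lintegral_smul_measure, smul_eq_mul, mul_assoc]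

section Dilation

variable {k : ℕ} {d : Fin k → ℕ}

theorem measurableSet_orthant : MeasurableSet (orthant k d) := by
  simp only [orthant, Set.ofPred_forall]
  exact .iInter fun r => .iInter fun i =>
    measurableSet_lt measurable_const ((measurable_pi_apply i).comp (measurable_pi_apply r))

theorem preimage_coordDiv_orthant {s : Fin k → ℝ} (hs : ∀ r, 0 < s r) :
    coordDiv s ⁻¹' orthant k d = orthant k d := by
  ext x
  simp only [Set.mem_preimage, orthant, coordDiv, Set.mem_ofPred_eq]
  exact forall_congr' fun r => forall_congr' fun i => div_pos_iff_of_pos_right (hs r)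

theorem measurePreserving_coordDiv_wMeasure {θ : Fin k → ℝ}
    {W : ∀ r : Fin k, (Fin (d r) → ℝ) → ℝ} (hWcont : ∀ r, ContinuousOn (W r) {y | y ≠ 0})
    (hWhom : ∀ (r : Fin k) (lam : ℝ), 0 < lam → ∀ y, W r (lam • y) = lam ^ θ r * W r y)
    {s : Fin k → ℝ} (hs : ∀ r, 0 < s r) :
    MeasurePreserving (coordDiv s) (wMeasure k d fun x => ∏ r, W r (x r))
      (ENNReal.ofReal (sPow s fun r => (d r : ℝ) + θ r) • wMeasure k d fun x => ∏ r, W r (x r)) := by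
  have hvol : MeasurePreserving (coordDiv s) (volume.restrict (orthant k d))
      (ENNReal.ofReal (∏ r, s r ^ d r) • volume.restrict (orthant k d)) := by
    have h := (measurePreserving_coordDiv (κ := fun r => Fin (d r)) hs).restrict_preimage
      measurableSet_orthant
    simpa only [preimage_coordDiv_orthant hs, Measure.restrict_smul, Fintype.card_fin] using h
  have hWmeas : Measurable fun x : PiX k d => ∏ r, W r (x r) :=
    Finset.measurable_prod _ fun r _ =>
      (measurable_of_continuousOn_compl_singleton 0 (hWcont r)).comp (measurable_pi_apply r)
  -- homogeneity of each `W r`, applied at the point `x r / s r`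
  have hweight : ∀ x : PiX k d, ENNReal.ofReal (∏ r, W r (x r)) =
      ENNReal.ofReal (∏ r, s r ^ θ r) * ENNReal.ofReal (∏ r, W r (coordDiv s x r)) := by
    intro x
    rw [← ENNReal.ofReal_mul (Finset.prod_nonneg fun r _ => (Real.rpow_pos_of_pos (hs r) _).le),
      ← Finset.prod_mul_distrib]
    refine congrArg _ (Finset.prod_congr rfl fun r _ => ?_)
    rw [← hWhom r (s r) (hs r)]
    congr 1
    funext i
    exact (mul_div_cancel₀ (x r i) (hs r).ne').symm
  have hconst : ENNReal.ofReal (∏ r, s r ^ θ r) * ENNReal.ofReal (∏ r, s r ^ d r) =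
      ENNReal.ofReal (sPow s fun r => (d r : ℝ) + θ r) := by
    rw [← ENNReal.ofReal_mul (Finset.prod_nonneg fun r _ => (Real.rpow_pos_of_pos (hs r) _).le),
      ← Finset.prod_mul_distrib, sPow]
    refine congrArg _ (Finset.prod_congr rfl fun r _ => ?_)
    rw [Real.rpow_add (hs r), Real.rpow_natCast, mul_comm]
  rw [← hconst]
  exact hvol.withDensity_of_eq_const_mul_comp hWmeas.ennreal_ofReal hweight

theorem eLpNorm_dilate {θ : Fin k → ℝ}
    {W : ∀ r : Fin k, (Fin (d r) → ℝ) → ℝ} (hWcont : ∀ r, ContinuousOn (W r) {y | y ≠ 0})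
    (hWhom : ∀ (r : Fin k) (lam : ℝ), 0 < lam → ∀ y, W r (lam • y) = lam ^ θ r * W r y)
    {s : Fin k → ℝ} (hs : ∀ r, 0 < s r) {f : PiX k d → ℝ}
    (hf : AEStronglyMeasurable f (wMeasure k d fun x => ∏ r, W r (x r)))
    {p : ℝ≥0∞} (hp : p ≠ ∞) :
    eLpNorm (dilate s f) p (wMeasure k d fun x => ∏ r, W r (x r)) =
      ENNReal.ofReal (sPow s fun r => (d r : ℝ) + θ r) ^ (1 / p).toReal *
        eLpNorm f p (wMeasure k d fun x => ∏ r, W r (x r)) := by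
  rw [← smul_eq_mul, ← eLpNorm_smul_measure_of_ne_top hp]
  exact eLpNorm_comp_measurePreserving (hf.smul_measure _)
    (measurePreserving_coordDiv_wMeasure hWcont hWhom hs)

end Dilation

theorem dilation_opNorm_le_general
    (k : ℕ) (d : Fin k → ℕ) (θ : Fin k → ℝ)
    (W : ∀ r : Fin k, (Fin (d r) → ℝ) → ℝ)
    (hWcont : ∀ r, ContinuousOn (W r) {y | y ≠ 0})
    (hWhom : ∀ (r : Fin k) (lam : ℝ), 0 < lam → ∀ y, W r (lam • y) = lam ^ θ r * W r y)
    (a : ℝ) (b : ℝ≥0∞) (ha : 1 ≤ a)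
    (ψ ζ ν : ℝ → ℝ) (hψ : IsEPsi a b ψ)
    (hmul : ∀ p ∈ expSet a b, ζ p = ψ p * ν p)
    (s : Fin k → ℝ) (hs : ∀ r, 0 < s r) :
    dilOpNorm (wMeasure k d fun x => ∏ r, W r (x r)) a b ψ ζ s ≤
      fundE a b ν (ENNReal.ofReal (sPow s fun r => (d r : ℝ) + θ r)) := by
  refine iSup_le fun f => ENNReal.div_le_of_le_mul <| iSup₂_le fun p hp => ?_
  have hp0 : 0 < p := by linarith [hp.1]
  rw [eLpNorm_dilate hWcont hWhom hs f.2 ENNReal.ofReal_ne_top, hmul p hp,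
    ENNReal.ofReal_mul (by linarith [hψ.2.1 p hp]), mul_comm (ENNReal.ofReal (ψ p)),
    ENNReal.mul_div_mul_comm (.inr ENNReal.ofReal_ne_top) (.inl ENNReal.ofReal_ne_top),
    one_div, ENNReal.toReal_inv, ENNReal.toReal_ofReal hp0.le, ← one_div]
  exact mul_le_mul' (by unfold fundE; exact le_iSup₂_of_le p hp le_rfl)
    (by unfold GNorm; exact le_iSup₂_of_le p hp le_rfl)

/-- **Theorem 1.1.A.** Let `ψ, ζ, ν ∈ EΨ(a,b)` with `ζ = ψ·ν`. For every
positive vector `s`, the dilation operator `σ_s` is bounded from `G(ψ)` into `G(ζ)` and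
`‖σ_s‖(G(ψ) → G(ζ)) ≤ φ(G(ν), s^{d+θ})`, where `s^{d+θ} = ∏_r s(r)^{d(r)+θ(r)}`. -/
theorem dilation_opNorm_le
    (k : ℕ) (d : Fin k → ℕ) (θ : Fin k → ℝ)
    (W : ∀ r : Fin k, (Fin (d r) → ℝ) → ℝ)
    (hWnn : ∀ r y, 0 ≤ W r y)
    (hWcont : ∀ r, ContinuousOn (W r) {y | y ≠ 0})
    (hWnontriv : ∀ r, ∃ y, W r y ≠ 0)
    (hWhom : ∀ (r : Fin k) (lam : ℝ), 0 < lam → ∀ y, W r (lam • y) = lam ^ θ r * W r y)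
    (a : ℝ) (b : ℝ≥0∞) (ha : 1 ≤ a) (hab : ENNReal.ofReal a < b)
    (ψ ζ ν : ℝ → ℝ) (hψ : IsEPsi a b ψ) (hζ : IsEPsi a b ζ) (hν : IsEPsi a b ν)
    (hmul : ∀ p ∈ expSet a b, ζ p = ψ p * ν p)
    (s : Fin k → ℝ) (hs : ∀ r, 0 < s r) :
    dilOpNorm (wMeasure k d fun x => ∏ r, W r (x r)) a b ψ ζ s ≤
      fundE a b ν (ENNReal.ofReal (sPow s fun r => (d r : ℝ) + θ r)) :=
  dilation_opNorm_le_general k d θ W hWcont hWhom a b ha ψ ζ ν hψ hmul s hs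
end
end

section
/- Let X = ℝ^d with Lebesgue measure and let A be a non-degenerate d×d real matrix. If ψ, ζ, ν ∈ EΨ(a,b) with ζ = ψ·ν, then the matrix dilation operator D_A, defined by (D_A f)(x) = f(A⁻¹x), is bounded from G(ψ) to G(ζ) with ‖D_A‖(G(ψ) → G(ζ)) ≤ φ(G(ν), |det A|). -/
noncomputable section

open MeasureTheory Filter Set Topology
open scoped ENNReal NNReal

/-- The matrix dilation operator `(D_A f)(x) = f(A⁻¹ x)` on functions on `ℝ^n`. -/
def matDilate {n : ℕ} (A : Matrix (Fin n) (Fin n) ℝ) (f : (Fin n → ℝ) → ℝ) :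
    (Fin n → ℝ) → ℝ := fun x => f (A⁻¹.mulVec x)

/-- The operator norm `‖D_A‖(G(ψ, μ) → G(ζ, μ))` of the matrix dilation operator. -/
def matOpNorm {n : ℕ} (μ : Measure (Fin n → ℝ)) (a : ℝ) (b : ℝ≥0∞) (ψ ζ : ℝ → ℝ)
    (A : Matrix (Fin n) (Fin n) ℝ) : ℝ≥0∞ :=
  ⨆ f : {f : (Fin n → ℝ) → ℝ // AEStronglyMeasurable f μ},
    GNorm μ a b ζ (matDilate A f.1) / GNorm μ a b ψ f.1

/-- Let `X = ℝ^n` with Lebesgue measure and `A` a non-degenerate `n×n`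
real matrix. If `ψ, ζ, ν ∈ EΨ(a,b)` with `ζ = ψ·ν`, then the matrix dilation operator
`D_A` is bounded from `G(ψ)` to `G(ζ)` with `‖D_A‖(G(ψ) → G(ζ)) ≤ φ(G(ν), |det A|)`. -/
theorem matrix_dilation_opNorm_le (n : ℕ)
    (A : Matrix (Fin n) (Fin n) ℝ) (hA : A.det ≠ 0)
    (a : ℝ) (b : ℝ≥0∞) (ha : 1 ≤ a) (hab : ENNReal.ofReal a < b)
    (ψ ζ ν : ℝ → ℝ) (hψ : IsEPsi a b ψ) (hζ : IsEPsi a b ζ) (hν : IsEPsi a b ν)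
    (hmul : ∀ p ∈ expSet a b, ζ p = ψ p * ν p) :
    matOpNorm (volume : Measure (Fin n → ℝ)) a b ψ ζ A ≤
      fundE a b ν (ENNReal.ofReal |A.det|) := by

  rw [matOpNorm]
  apply iSup_le
  rintro ⟨f, hf⟩
  set δ : ℝ≥0∞ := ENNReal.ofReal |A.det| with hδ
  have hδ0 : δ ≠ 0 := by
    simp only [hδ, ne_eq, ENNReal.ofReal_eq_zero, not_le]
    exact abs_pos.mpr hA
  apply ENNReal.div_le_of_le_mul
  rw [GNorm]
  apply iSup₂_le
  intro p hp
  have hp1 : (1:ℝ) < p := lt_of_le_of_lt ha hp.1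
  have hp0 : (0:ℝ) < p := lt_trans one_pos hp1
  have hψ1 : 1 ≤ ψ p := hψ.2.1 p hp
  have hν1 : 1 ≤ ν p := hν.2.1 p hp
  have hdetinv : A⁻¹.det ≠ 0 := by
    rw [Matrix.det_nonsing_inv, Ring.inverse_eq_inv']
    exact inv_ne_zero hA
  have hmap : Measure.map (Matrix.toLin' A⁻¹) (volume : Measure (Fin n → ℝ))
      = δ • volume := by
    rw [Real.map_matrix_volume_pi_eq_smul_volume_pi hdetinv]
    congr 1
    simp [hδ, Matrix.det_nonsing_inv, Ring.inverse_eq_inv', abs_inv]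
  have hmeas : Measurable (Matrix.toLin' A⁻¹) :=
    (Matrix.toLin' A⁻¹).continuous_of_finiteDimensional.measurable
  have hcomp : matDilate A f = f ∘ (Matrix.toLin' A⁻¹) := by
    funext x
    simp [matDilate, Matrix.toLin'_apply]
  have hfd : AEStronglyMeasurable f (Measure.map (Matrix.toLin' A⁻¹)
      (volume : Measure (Fin n → ℝ))) := by
    rw [hmap]
    exact hf.mono_ac Measure.smul_absolutelyContinuous
  have hkey : eLpNorm (matDilate A f) (ENNReal.ofReal p) volume
      = δ ^ (1/p) * eLpNorm f (ENNReal.ofReal p) volume := by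
    rw [hcomp, ← eLpNorm_map_measure hfd hmeas.aemeasurable, hmap,
      eLpNorm_smul_measure_of_ne_zero hδ0, smul_eq_mul]
    congr 2
    rw [ENNReal.toReal_div, ENNReal.toReal_one, ENNReal.toReal_ofReal hp0.le]
  have hψ0 : (0:ℝ) ≤ ψ p := le_trans zero_le_one hψ1
  rw [hkey, hmul p hp, ENNReal.ofReal_mul hψ0]
  set X := ENNReal.ofReal (ψ p) with hX
  set Y := ENNReal.ofReal (ν p) with hY
  have hX0 : X ≠ 0 := by
    simp [hX, ENNReal.ofReal_eq_zero, not_le, lt_of_lt_of_le one_pos hψ1]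
  have hXtop : X ≠ ∞ := ENNReal.ofReal_ne_top
  have hsplit : δ ^ (1/p) * eLpNorm f (ENNReal.ofReal p) volume / (X * Y)
      = (δ ^ (1/p) / Y) * (eLpNorm f (ENNReal.ofReal p) volume / X) := by
    simp only [div_eq_mul_inv]
    rw [ENNReal.mul_inv (Or.inl hX0) (Or.inl hXtop)]
    ring
  rw [hsplit]
  refine mul_le_mul' ?_ ?_
  · exact le_iSup₂ (f := fun p (_ : p ∈ expSet a b) =>
      δ ^ (1/p) / ENNReal.ofReal (ν p)) p hp
  · exact le_iSup₂ (f := fun p (_ : p ∈ expSet a b) =>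
      eLpNorm f (ENNReal.ofReal p) volume / ENNReal.ofReal (ψ p)) p hp
end
end
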